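/- arXiv:1005.4436 — 3 statements merged into one kernel-verified Lean document; each statement's English description precedes it below -/
import Mathlib

section
/- Let h be the 3×3 Hermitian matrix over the Gaussian rationals with rows (0,0,1), (0,1,0), (1,0,0), and let A be the 3×3 matrix over ℤ[i] with rows (0,0,i), (0,1,0), (i,0,-1). Then A preserves the Hermitian form h (i.e., Aᴴ h A = h, where Aᴴ is the conjugate transpose) and A³ = I, so A is an element of order 3 in the unitary group of h. -/
/-! With `i² = -1` and `star i = -i`, the matrix `!![0, 0, i; 0, 1, 0; i, 0, -1]` is unitary for
the antidiagonal Hermitian form and has cube `1`; both are finite computations of `3 × 3` products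
using only these two relations. In `ℤ[i]` one takes `i = Zsqrtd.sqrtd`. -/

open Matrix

theorem Matrix.conjTranspose_fin_three_of {α : Type*} [Star α] (a b c d e f g h i : α) :
    !![a, b, c; d, e, f; g, h, i]ᴴ =
      !![star a, star d, star g; star b, star e, star h; star c, star f, star i] := by
  ext j k
  fin_cases j <;> fin_cases k <;> rfl

namespace PicardTorsion

variable {R : Type*} [Ring R]

/-- The Hermitian form of signature `(2, 1)` defining `U(2, 1)` in the Siegel-domain model. -/
def antidiagForm : Matrix (Fin 3) (Fin 3) R := !![0, 0, 1; 0, 1, 0; 1, 0, 0]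

def orderThree (i : R) : Matrix (Fin 3) (Fin 3) R := !![0, 0, i; 0, 1, 0; i, 0, -1]

variable {i : R}

theorem orderThree_pow_three (hi : i * i = -1) : orderThree i ^ 3 = 1 := by
  rw [orderThree, pow_three, mul_fin_three, mul_fin_three, one_fin_three]
  simp [hi]

theorem conjTranspose_mul_antidiagForm_mul_orderThree [StarRing R] (hstar : star i = -i)
    (hi : i * i = -1) : (orderThree i)ᴴ * antidiagForm * orderThree i = antidiagForm := by
  rw [orderThree, antidiagForm, conjTranspose_fin_three_of, mul_fin_three, mul_fin_three]
  simp [hstar, hi]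

theorem orderThree_ne_one [Nontrivial R] : orderThree i ≠ 1 := by
  intro h
  simpa [orderThree] using congrFun₂ h 0 0

end PicardTorsion

theorem GaussianInt.sqrtd_mul_sqrtd : (Zsqrtd.sqrtd : GaussianInt) * Zsqrtd.sqrtd = -1 := by
  rw [Zsqrtd.dmuld]
  simp

theorem GaussianInt.star_sqrtd : star (Zsqrtd.sqrtd : GaussianInt) = -Zsqrtd.sqrtd := by
  ext <;> simp

theorem picard_torsion_order_three_gaussian
    (h A : Matrix (Fin 3) (Fin 3) GaussianInt)
    (hh : h = !![0, 0, 1; 0, 1, 0; 1, 0, 0])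
    (hA : A = !![0, 0, Zsqrtd.sqrtd; 0, 1, 0; Zsqrtd.sqrtd, 0, -1]) :
    Aᴴ * h * A = h ∧ A ^ 3 = 1 ∧ A ≠ 1 := by
  subst hh hA
  exact ⟨PicardTorsion.conjTranspose_mul_antidiagForm_mul_orderThree GaussianInt.star_sqrtd
      GaussianInt.sqrtd_mul_sqrtd,
    PicardTorsion.orderThree_pow_three GaussianInt.sqrtd_mul_sqrtd,
    PicardTorsion.orderThree_ne_one⟩
end

section
/- Let h be the 3×3 Hermitian matrix over ℂ with rows (0,0,1), (0,1,0), (1,0,0), and let B be the 3×3 complex matrix with rows (0,0,i/2), (0,1,0), (2i,0,-1). Then Bᴴ h B = h and B³ = I, so B has order 3 in the unitary group of h. -/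
open Matrix Complex

theorem sister_torsion_order_three
    (h B : Matrix (Fin 3) (Fin 3) ℂ)
    (hh : h = !![0, 0, 1; 0, 1, 0; 1, 0, 0])
    (hB : B = !![0, 0, I / 2; 0, 1, 0; 2 * I, 0, -1]) :
    Bᴴ * h * B = h ∧ B ^ 3 = 1 ∧ B ≠ 1 := by
  have conjTranspose_B : Bᴴ = !![0, 0, -2 * I; 0, 1, 0; -I / 2, 0, -1] := by
    ext i j
    fin_cases i <;> fin_cases j <;> simp [hB, conjTranspose_apply]
  have sq_B : B ^ 2 = !![-1, 0, -I / 2; 0, 1, 0; -2 * I, 0, 0] := by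
    rw [sq, hB, mul_fin_three]
    ring_nf; simp
  refine ⟨?_, ?_, fun hB_one ↦ ?_⟩
  · rw [conjTranspose_B, hh, hB, mul_fin_three, mul_fin_three]
    ring_nf; simp
  · rw [pow_succ, sq_B, hB, mul_fin_three, one_fin_three]
    ring_nf; simp
  · simpa [hB] using congr_fun₂ hB_one 0 0
end

section
/- Let χ be the primitive quadratic Dirichlet character of conductor 11 given by the Legendre symbol χ(n) = (n/11) composed with sign -1, i.e., the odd quadratic character mod 11 (the Kronecker symbol (-11/·)). Then L(χ, -2) = -6. -/
/-! For odd `Φ : ZMod N → ℂ`, `L(Φ, s) = N ^ (-s) * ∑ Φ j * ζ_odd(j / N, s)`, and at `s = -2k` the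
odd Hurwitz zeta function is `-B_{2k+1}(x) / (2k + 1)` on `0 ≤ x ≤ 1`. Hence
`L(Φ, -2k) = -B_{2k+1,Φ} / (2k + 1)`, and for `χ = (-11/·)` one computes
`B_{3,χ} = 11² * ∑ χ(a) B₃(a / 11) = 18`. -/

open Complex Finset HurwitzZeta Polynomial

theorem Polynomial.bernoulli_three :
    Polynomial.bernoulli 3 = X ^ 3 - C (3 / 2) * X ^ 2 + C 2⁻¹ * X := by
  simp only [Polynomial.bernoulli, sum_range_succ, sum_range_zero, _root_.bernoulli_one,
    bernoulli_eq_bernoulli'_of_ne_one (by decide : 2 ≠ 1), bernoulli'_two,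
    bernoulli_eq_bernoulli'_of_ne_one (by decide : 3 ≠ 1), bernoulli'_three,
    ← C_mul_X_pow_eq_monomial]
  norm_num [Nat.choose, sub_eq_add_neg]

theorem ZMod.sum_eq_sum_range {M : Type*} [AddCommMonoid M] {N : ℕ} [NeZero N]
    (f : ZMod N → M) : ∑ j, f j = ∑ n ∈ range N, f n :=
  sum_nbij' ZMod.val Nat.cast (by simp [ZMod.val_lt]) (by simp) (by simp)
    (fun n hn ↦ ZMod.val_cast_of_lt (mem_range.1 hn)) (by simp)

namespace ZMod

variable {N : ℕ} [NeZero N]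

/-- The generalized Bernoulli number `B_{k,Φ}`, with the sum over `0 ≤ a < N` instead of the
customary `1 ≤ a ≤ N`; the two conventions differ only for `k = 1`. -/
noncomputable def generalizedBernoulli (Φ : ZMod N → ℂ) (k : ℕ) : ℂ :=
  (N : ℂ) ^ ((k : ℤ) - 1) *
    ∑ a ∈ range N, Φ a * ((Polynomial.bernoulli k).map (algebraMap ℚ ℂ)).eval ((a : ℂ) / N)

lemma hurwitzZetaOdd_toAddCircle_natCast_neg_two_mul_nat {k : ℕ} (hk : k ≠ 0) {a : ℕ}
    (ha : a ≤ N) : hurwitzZetaOdd (toAddCircle (a : ZMod N)) (-(2 * k)) =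
      -1 / (2 * k + 1) * ((Polynomial.bernoulli (2 * k + 1)).map (algebraMap ℚ ℂ)).eval
        ((a : ℂ) / N) := by
  have hmem : (a / N : ℝ) ∈ Set.Icc 0 1 :=
    ⟨by positivity, div_le_one_of_le₀ (mod_cast ha) N.cast_nonneg⟩
  rw [toAddCircle_natCast, hurwitzZetaOdd_neg_two_mul_nat hk hmem]
  simp

theorem LFunction_neg_two_mul_nat_of_odd {Φ : ZMod N → ℂ} (hΦ : Φ.Odd) {k : ℕ} (hk : k ≠ 0) :
    LFunction Φ (-(2 * k)) = -generalizedBernoulli Φ (2 * k + 1) / (2 * k + 1) := by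
  rw [LFunction_def_odd hΦ, sum_eq_sum_range, generalizedBernoulli, neg_neg,
    sum_congr rfl fun a ha ↦ by
      rw [hurwitzZetaOdd_toAddCircle_natCast_neg_two_mul_nat hk (mem_range.1 ha).le]]
  have hpow : (N : ℂ) ^ (2 * (k : ℂ)) = (N : ℂ) ^ (((2 * k + 1 : ℕ) : ℤ) - 1) := by
    rw [show ((2 * k + 1 : ℕ) : ℤ) - 1 = ((2 * k : ℕ) : ℤ) by push_cast; ring, zpow_natCast,
      ← cpow_natCast]
    simp
  rw [hpow, mul_sum, mul_sum, ← sum_neg_distrib, sum_div]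
  exact sum_congr rfl fun _ _ ↦ by ring

end ZMod

theorem LFunction_quadratic_character_conductor_eleven_at_neg_two
    (χ : DirichletCharacter ℂ 11)
    (hχ : ∀ n : ℕ, χ (n : ZMod 11) =
      if n % 11 = 0 then 0
      else if n % 11 = 1 ∨ n % 11 = 3 ∨ n % 11 = 4 ∨ n % 11 = 5 ∨ n % 11 = 9 then 1
      else -1) :
    DirichletCharacter.LFunction χ (-2) = -6 := by
  have hodd : χ.Odd := by
    have h := hχ 10
    rw [show ((10 : ℕ) : ZMod 11) = -1 by decide] at h
    norm_num at h
    exact h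
  have hB : ZMod.generalizedBernoulli χ 3 = 18 := by
    norm_num [ZMod.generalizedBernoulli, sum_range_succ, hχ, Polynomial.bernoulli_three]
  rw [DirichletCharacter.LFunction, show (-2 : ℂ) = -(2 * (1 : ℕ)) by norm_num,
    ZMod.LFunction_neg_two_mul_nat_of_odd hodd.to_fun one_ne_zero]
  norm_num [hB]
end
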